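/- Let λ be a positive root and s ∈ B. If ρ(s) λ is a positive root that dominates α_s, then δ(λ) < δ(ρ(s) λ). -/

import Mathlib

open Real

variable {B : Type*}

/-- The pairing constant `⟨α_s, α_t⟩` of the standard bilinear form:
`-cos (π / M s t)` if `M s t ≠ 0`, and `-1` if `M s t = 0` (i.e. `m_{s,t} = ∞`). -/
noncomputable def pairing (M : CoxeterMatrix B) (s t : B) : ℝ :=
  if M s t = 0 then -1 else -Real.cos (Real.pi / (M s t : ℝ))

/-- The standard symmetric bilinear form on `V = B → ℝ`. -/
noncomputable def form [Fintype B] (M : CoxeterMatrix B) (v w : B → ℝ) : ℝ :=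
  ∑ s, ∑ t, v s * w t * pairing M s t

/-- The simple root `α_s`, i.e. the standard basis vector at `s`. -/
noncomputable def sroot [DecidableEq B] (s : B) : B → ℝ := Pi.single s 1

/-- `λ` is a root: `λ = ρ(w) α_s` for some `w ∈ W`, `s ∈ B`. -/
def IsRoot [DecidableEq B] (M : CoxeterMatrix B)
    (ρ : M.Group →* Module.End ℝ (B → ℝ)) (lam : B → ℝ) : Prop :=
  ∃ (w : M.Group) (s : B), ρ w (sroot s) = lam

/-- `λ` is positive: all coordinates are nonnegative. -/
def IsPos (lam : B → ℝ) : Prop := ∀ s, 0 ≤ lam s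

/-- `λ` is negative: all coordinates are nonpositive. -/
def IsNeg (lam : B → ℝ) : Prop := ∀ s, lam s ≤ 0

/-- `λ` is a positive root. -/
def IsPosRoot [DecidableEq B] (M : CoxeterMatrix B)
    (ρ : M.Group →* Module.End ℝ (B → ℝ)) (lam : B → ℝ) : Prop :=
  IsRoot M ρ lam ∧ IsPos lam

/-- `λ` dominates `μ`: for every `w ∈ W`, if `ρ(w) μ` is positive then so is `ρ(w) λ`. -/
def Dominates (M : CoxeterMatrix B)
    (ρ : M.Group →* Module.End ℝ (B → ℝ)) (lam mu : B → ℝ) : Prop :=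
  ∀ w : M.Group, IsPos (ρ w mu) → IsPos (ρ w lam)

/-- `λ` is a minimal root: a positive root dominating no positive root other than itself. -/
def IsMinimal [DecidableEq B] (M : CoxeterMatrix B)
    (ρ : M.Group →* Module.End ℝ (B → ℝ)) (lam : B → ℝ) : Prop :=
  IsPosRoot M ρ lam ∧
    ∀ mu, IsPosRoot M ρ mu → Dominates M ρ lam mu → mu = lam

/-- The depth `δ(λ)` of a positive root:
the least Coxeter length of a `w ∈ W` with `ρ(w⁻¹) λ` negative. -/
noncomputable def depth (M : CoxeterMatrix B)
    (ρ : M.Group →* Module.End ℝ (B → ℝ)) (lam : B → ℝ) : ℕ :=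
  sInf {n | ∃ w : M.Group, IsNeg (ρ w⁻¹ lam) ∧ M.toCoxeterSystem.length w = n}

/-- The partial order `λ ⪯ μ` on positive roots:
`μ = ρ(w) λ` for some `w` with `δ(μ) = ℓ(w) + δ(λ)`. -/
def PLE (M : CoxeterMatrix B)
    (ρ : M.Group →* Module.End ℝ (B → ℝ)) (lam mu : B → ℝ) : Prop :=
  ∃ w : M.Group, mu = ρ w lam ∧
    depth M ρ mu = M.toCoxeterSystem.length w + depth M ρ lam

/-- The Coxeter graph of `M`: distinct `s`, `t` are adjacent iff `M s t ≥ 3` or `M s t = 0`. -/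
def coxGraph (M : CoxeterMatrix B) : SimpleGraph B where
  Adj s t := s ≠ t ∧ (M s t = 0 ∨ 3 ≤ M s t)
  symm := by
    constructor
    intro s t h
    exact ⟨h.1.symm, by rw [M.symmetric t s]; exact h.2⟩
  loopless := by constructor; intro s h; exact h.1 rfl

/-- The support of a vector `λ ∈ V`. -/
def supp (lam : B → ℝ) : Set B := {s | lam s ≠ 0}

/-! The key input is the classical fact that `ℓ(w s) > ℓ(w)` forces `ρ(w) α_s ≥ 0`. It is proved
by induction on `ℓ(w)`: for a right descent `t` of `w`, write `w = v u` with `u` a word in `s, t`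
and `v` without right descent in `{s, t}`; then `ρ(v) α_s, ρ(v) α_t ≥ 0` by induction, and
`ρ(u) α_s` is a nonnegative combination of `α_s, α_t` by the explicit computation in the rank-two
(dihedral) case.

For the theorem, take `w` of length `δ(sλ)` with `ρ(w⁻¹) sλ` negative. As a root it is not
positive, so domination makes `ρ(w⁻¹) α_s` not positive, whence `ℓ(s w) < ℓ(w)`. Since
`ρ((s w)⁻¹) λ = ρ(w⁻¹) sλ` is negative, `δ(λ) ≤ ℓ(s w) < δ(sλ)`. -/

open CoxeterSystem

lemma pairing_self (M : CoxeterMatrix B) (s : B) : pairing M s s = 1 := by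
  simp [pairing]

lemma pairing_comm (M : CoxeterMatrix B) (s t : B) : pairing M s t = pairing M t s := by
  rw [pairing, pairing, M.symmetric s t]

lemma form_sroot_sroot [DecidableEq B] [Fintype B] (M : CoxeterMatrix B) (s t : B) :
    form M (sroot s) (sroot t) = pairing M s t := by
  simp [form, sroot, Pi.single_apply]

lemma sroot_ne_zero [DecidableEq B] (s : B) : sroot (B := B) s ≠ 0 :=
  Pi.single_ne_zero_iff.mpr one_ne_zero

lemma isPos_sroot [DecidableEq B] (s : B) : IsPos (sroot (B := B) s) := by
  intro x
  by_cases h : x = s <;> simp [sroot, h]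

/-- Closed form of the recursion `x₀ = 0`, `x₁ = 1`, `x_{k+2} = 2 cos (π / m) x_{k+1} - x_k`
(with `cos (π / ∞) = 1`), which governs the coefficients of `ρ(⋯ s t) α_s`. -/
noncomputable def dihedralCoeff (m k : ℕ) : ℝ :=
  if m = 0 then k else sin (k * (π / m)) / sin (π / m)

lemma dihedralCoeff_zero (m : ℕ) : dihedralCoeff m 0 = 0 := by
  simp [dihedralCoeff]

lemma dihedralCoeff_one {m : ℕ} (hm : m ≠ 1) : dihedralCoeff m 1 = 1 := by
  unfold dihedralCoeff
  split_ifs with h0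
  · simp
  · have hm1 : (1 : ℝ) < m := by norm_cast; omega
    have : 0 < sin (π / m) :=
      sin_pos_of_pos_of_lt_pi (by positivity) (div_lt_self pi_pos hm1)
    simp [this.ne']

lemma dihedralCoeff_add_two (M : CoxeterMatrix B) (s t : B) (k : ℕ) :
    dihedralCoeff (M s t) (k + 2) =
      -(2 * pairing M s t) * dihedralCoeff (M s t) (k + 1) - dihedralCoeff (M s t) k := by
  unfold dihedralCoeff pairing
  split_ifs
  · push_cast
    ring
  · set θ := π / (M s t : ℝ)
    have hsin : sin ((k + 2 : ℕ) * θ) = 2 * cos θ * sin ((k + 1 : ℕ) * θ) - sin (k * θ) := by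
      rw [show ((k + 2 : ℕ) : ℝ) * θ = (k + 1 : ℕ) * θ + θ by push_cast; ring,
        show (k : ℝ) * θ = (k + 1 : ℕ) * θ - θ by push_cast; ring, sin_add, sin_sub]
      ring
    rw [hsin]
    ring

lemma dihedralCoeff_nonneg {m k : ℕ} (hk : m = 0 ∨ k ≤ m) : 0 ≤ dihedralCoeff m k := by
  unfold dihedralCoeff
  split_ifs with h0
  · positivity
  · have hm : (1 : ℝ) ≤ m := by norm_cast; omega
    have hkm : (k : ℝ) ≤ m := by exact_mod_cast hk.resolve_left h0
    apply div_nonneg <;> apply sin_nonneg_of_nonneg_of_le_pi (by positivity)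
    · calc (k : ℝ) * (π / m) ≤ m * (π / m) := by gcongr
        _ = π := by field_simp
    · exact div_le_self pi_pos.le hm

section Words

variable {M : CoxeterMatrix B} {W : Type*} [Group W] {cs : CoxeterSystem M W}

lemma eq_alternatingWord_of_isReduced_append_singleton {s t : B} {ω : List B}
    (hω : ∀ x ∈ ω, x = s ∨ x = t) (hred : cs.IsReduced (ω ++ [s])) :
    ω = alternatingWord s t ω.length := by
  induction ω using List.reverseRecOn generalizing s t with
  | nil => rfl
  | append_singleton ω r ih =>
    obtain rfl : r = t := by
      refine (hω r (by simp)).resolve_left ?_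
      rintro rfl
      have hcancel : cs.wordProd (ω ++ [r] ++ [r]) = cs.wordProd ω := by
        rw [wordProd_append, wordProd_append, wordProd_singleton,
          cs.simple_mul_simple_cancel_right]
      have hlen := hred.eq
      rw [hcancel, List.length_append, List.length_append, List.length_singleton] at hlen
      have := cs.length_wordProd_le ω
      omega
    have hω' : ω = alternatingWord r s ω.length :=
      ih (fun x hx => (hω x (by simp [hx])).symm)
        (by simpa only [List.take_left] using hred.take (ω ++ [r]).length)
    rw [List.length_append, List.length_singleton, alternatingWord_succ, ← hω',
      List.concat_eq_append]

lemma exists_mul_wordProd_not_isRightDescent (s t : B) (v : W) (ω : List B)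
    (hω : ∀ x ∈ ω, x = s ∨ x = t) :
    ∃ (v' : W) (ω' : List B), (∀ x ∈ ω', x = s ∨ x = t) ∧
      v * cs.wordProd ω = v' * cs.wordProd ω' ∧
      cs.length v' + ω'.length = cs.length v + ω.length ∧
      ¬ cs.IsRightDescent v' s ∧ ¬ cs.IsRightDescent v' t := by
  by_cases h : ∃ r, (r = s ∨ r = t) ∧ cs.IsRightDescent v r
  · obtain ⟨r, hr, hdesc⟩ := h
    obtain ⟨v', ω', hω', heq, hlen, hs, ht⟩ :=
      exists_mul_wordProd_not_isRightDescent s t (v * cs.simple r) (r :: ω)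
        (List.forall_mem_cons.mpr ⟨hr, hω⟩)
    refine ⟨v', ω', hω', ?_, ?_, hs, ht⟩
    · rw [← heq, wordProd_cons, mul_assoc, cs.simple_mul_simple_cancel_left]
    · have := cs.isRightDescent_iff.mp hdesc
      simp only [List.length_cons] at hlen
      omega
  · push Not at h
    exact ⟨v, ω, hω, rfl, rfl, h s (.inl rfl), h t (.inr rfl)⟩
termination_by cs.length v
decreasing_by exact hdesc

end Words

section GeometricRepresentation

variable [DecidableEq B] [Fintype B] {M : CoxeterMatrix B} {W : Type*} [Group W]
  {cs : CoxeterSystem M W} {ρ : W →* Module.End ℝ (B → ℝ)}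
  (hρ : ∀ (s : B) (v : B → ℝ), ρ (cs.simple s) v = v - (2 * form M v (sroot s)) • sroot s)
include hρ

lemma rho_simple_sroot (s t : B) :
    ρ (cs.simple t) (sroot s) = sroot s - (2 * pairing M s t) • sroot t := by
  rw [hρ, form_sroot_sroot]

lemma rho_simple_sroot_self (s : B) : ρ (cs.simple s) (sroot s) = -sroot s := by
  rw [rho_simple_sroot hρ, pairing_self]
  module

lemma rho_simple_smul_add_smul (u v : B) (a b : ℝ) :
    ρ (cs.simple v) (a • sroot u + b • sroot v) =
      a • sroot u + (-(2 * pairing M u v) * a - b) • sroot v := by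
  rw [map_add, map_smul, map_smul, rho_simple_sroot hρ, rho_simple_sroot_self hρ]
  module

lemma rho_alternatingWord_sroot {s t : B} (hst : s ≠ t) (k : ℕ) :
    ρ (cs.wordProd (alternatingWord s t k)) (sroot s) =
      dihedralCoeff (M s t) (k + 1) • sroot (if Even k then s else t) +
        dihedralCoeff (M s t) k • sroot (if Even k then t else s) := by
  induction k with
  | zero => simp [alternatingWord, dihedralCoeff_one (M.off_diagonal s t hst), dihedralCoeff_zero]
  | succ k ih =>
    rw [alternatingWord_succ', wordProd_cons, map_mul, Module.End.mul_apply, ih,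
      dihedralCoeff_add_two]
    rcases Nat.even_or_odd k with hk | hk
    · have hk' : ¬ Even (k + 1) := by simpa [Nat.even_add_one] using hk
      simp only [hk, hk', if_true, if_false]
      rw [rho_simple_smul_add_smul hρ]
      abel
    · have hk' : Even (k + 1) := hk.add_one
      simp only [Nat.not_even_iff_odd.mpr hk, hk', if_true, if_false]
      rw [rho_simple_smul_add_smul hρ, pairing_comm]
      abel

lemma rho_wordProd_sroot_of_isReduced_append_singleton {s t : B} (hst : s ≠ t) {ω : List B}
    (hω : ∀ x ∈ ω, x = s ∨ x = t) (hred : cs.IsReduced (ω ++ [s])) :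
    ∃ a b : ℝ, 0 ≤ a ∧ 0 ≤ b ∧ ρ (cs.wordProd ω) (sroot s) = a • sroot s + b • sroot t := by
  have hω' := eq_alternatingWord_of_isReduced_append_singleton hω hred
  set k := ω.length
  have hk : M s t = 0 ∨ k + 1 ≤ M s t := by
    by_contra! h
    refine cs.not_isReduced_alternatingWord t s (m := k + 1) (M.symmetric t s ▸ h.1) ?_ ?_
    · rw [M.symmetric t s]
      exact h.2
    · rwa [alternatingWord_succ, ← hω', List.concat_eq_append]
  have h₀ := dihedralCoeff_nonneg (hk.imp_right (Nat.le_of_succ_le))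
  have h₁ := dihedralCoeff_nonneg hk
  rw [hω', rho_alternatingWord_sroot hρ hst]
  split_ifs
  · exact ⟨_, _, h₁, h₀, rfl⟩
  · exact ⟨_, _, h₀, h₁, add_comm _ _⟩

theorem isPos_rho_sroot_of_not_isRightDescent (w : W) (s : B) (hws : ¬ cs.IsRightDescent w s) :
    IsPos (ρ w (sroot s)) := by
  by_cases hw1 : w = 1
  · rw [hw1, map_one]
    exact isPos_sroot s
  obtain ⟨t, ht⟩ := cs.exists_rightDescent_of_ne_one hw1
  have hts : t ≠ s := by
    rintro rfl
    exact hws ht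
  obtain ⟨v, ω, hω, hw, hlen, hvs, hvt⟩ :=
    exists_mul_wordProd_not_isRightDescent s t w [] (by simp)
  simp only [wordProd_nil, mul_one, List.length_nil, add_zero] at hw hlen
  have hω_ne : ω ≠ [] := by
    rintro rfl
    rw [wordProd_nil, mul_one] at hw
    exact hvt (hw ▸ ht)
  have hvw : cs.length v < cs.length w := by
    have := List.length_pos_iff.mpr hω_ne
    omega
  have hred : cs.IsReduced (ω ++ [s]) := by
    have h₁ :
        cs.length (w * cs.simple s) ≤ cs.length v + cs.length (cs.wordProd (ω ++ [s])) := by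
      rw [hw, mul_assoc, wordProd_append, wordProd_singleton]
      exact cs.length_mul_le _ _
    have h₂ := cs.length_wordProd_le (ω ++ [s])
    rw [cs.not_isRightDescent_iff.mp hws] at h₁
    simp only [CoxeterSystem.IsReduced, List.length_append, List.length_singleton] at h₂ ⊢
    omega
  obtain ⟨a, b, ha, hb, hab⟩ :=
    rho_wordProd_sroot_of_isReduced_append_singleton hρ hts.symm hω hred
  have hvs' := isPos_rho_sroot_of_not_isRightDescent v s hvs
  have hvt' := isPos_rho_sroot_of_not_isRightDescent v t hvt
  intro x
  rw [hw, map_mul, Module.End.mul_apply, hab, map_add, map_smul, map_smul]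
  exact add_nonneg (mul_nonneg ha (hvs' x)) (mul_nonneg hb (hvt' x))
termination_by cs.length w

end GeometricRepresentation

section Depth

variable {M : CoxeterMatrix B} {ρ : M.Group →* Module.End ℝ (B → ℝ)} {lam : B → ℝ}

lemma depth_le_length {w : M.Group} (h : IsNeg (ρ w⁻¹ lam)) :
    depth M ρ lam ≤ M.toCoxeterSystem.length w :=
  Nat.sInf_le ⟨w, h, rfl⟩

variable [DecidableEq B]

lemma IsRoot.ne_zero (h : IsRoot M ρ lam) : lam ≠ 0 := by
  obtain ⟨w, s, rfl⟩ := h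
  intro h0
  have := congrArg (ρ w⁻¹) h0
  rw [← Module.End.mul_apply, ← map_mul, inv_mul_cancel, map_one, map_zero] at this
  exact sroot_ne_zero s this

lemma IsRoot.map (h : IsRoot M ρ lam) (w : M.Group) : IsRoot M ρ (ρ w lam) := by
  obtain ⟨u, s, rfl⟩ := h
  refine ⟨w * u, s, ?_⟩
  rw [map_mul, Module.End.mul_apply]

lemma IsRoot.not_isPos_of_isNeg (h : IsRoot M ρ lam) (hneg : IsNeg lam) : ¬ IsPos lam :=
  fun hpos => h.ne_zero (funext fun x => le_antisymm (hneg x) (hpos x))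

lemma IsRoot.exists_isNeg_length_eq_depth [Fintype B]
    (hρ : ∀ (s : B) (v : B → ℝ), ρ (M.simple s) v = v - (2 * form M v (sroot s)) • sroot s)
    (h : IsRoot M ρ lam) :
    ∃ w : M.Group, IsNeg (ρ w⁻¹ lam) ∧ M.toCoxeterSystem.length w = depth M ρ lam := by
  obtain ⟨u, t, rfl⟩ := h
  have hneg : IsNeg (ρ (u * M.simple t)⁻¹ (ρ u (sroot t))) := by
    have hinv : (M.simple t)⁻¹ = M.simple t := M.toCoxeterSystem.inv_simple t
    have hflip : ρ (M.simple t) (sroot t) = -sroot t :=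
      rho_simple_sroot_self (cs := M.toCoxeterSystem) hρ t
    rw [← Module.End.mul_apply, ← map_mul, mul_inv_rev, mul_assoc, inv_mul_cancel, mul_one,
      hinv, hflip]
    exact fun x => neg_nonpos.mpr (isPos_sroot t x)
  exact Nat.sInf_mem (⟨_, _, hneg, rfl⟩ : {n | ∃ w : M.Group,
    IsNeg (ρ w⁻¹ (ρ u (sroot t))) ∧ M.toCoxeterSystem.length w = n}.Nonempty)

end Depth

theorem statement4_general [DecidableEq B] [Fintype B] (M : CoxeterMatrix B)
    (ρ : M.Group →* Module.End ℝ (B → ℝ))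
    (hρ : ∀ (s : B) (v : B → ℝ),
      ρ (M.simple s) v = v - (2 * form M v (sroot s)) • sroot s)
    (lam : B → ℝ) (s : B)
    (hpos : IsPosRoot M ρ (ρ (M.simple s) lam))
    (hdom : Dominates M ρ (ρ (M.simple s) lam) (sroot s)) :
    depth M ρ lam < depth M ρ (ρ (M.simple s) lam) := by
  set cs := M.toCoxeterSystem
  obtain ⟨w, hneg, hw⟩ := hpos.1.exists_isNeg_length_eq_depth hρ
  have hnot : ¬ IsPos (ρ w⁻¹ (sroot s)) := fun h =>
    (hpos.1.map w⁻¹).not_isPos_of_isNeg hneg (hdom w⁻¹ h)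
  have hdesc : cs.IsRightDescent w⁻¹ s := by
    by_contra h
    exact hnot (isPos_rho_sroot_of_not_isRightDescent (cs := cs) hρ w⁻¹ s h)
  calc depth M ρ lam ≤ cs.length (cs.simple s * w) := by
        refine depth_le_length ?_
        rwa [mul_inv_rev, cs.inv_simple, map_mul, Module.End.mul_apply]
    _ < cs.length w := cs.isRightDescent_inv_iff.mp hdesc
    _ = depth M ρ (ρ (M.simple s) lam) := hw

theorem statement4 [DecidableEq B] [Fintype B] (M : CoxeterMatrix B)
    (ρ : M.Group →* Module.End ℝ (B → ℝ))
    (hρ : ∀ (s : B) (v : B → ℝ),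
      ρ (M.simple s) v = v - (2 * form M v (sroot s)) • sroot s)
    (lam : B → ℝ) (hlam : IsPosRoot M ρ lam) (s : B)
    (hpos : IsPosRoot M ρ (ρ (M.simple s) lam))
    (hdom : Dominates M ρ (ρ (M.simple s) lam) (sroot s)) :
    depth M ρ lam < depth M ρ (ρ (M.simple s) lam) :=
  statement4_general M ρ hρ lam s hpos hdom
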